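/- Let j be an integer with (m+1)/2 < j ≤ m. Then A_{(j)} − α( (−1)^(m(m+1)/2) v_1 ∧ ⋯ ∧ v_{m+1−j} ∧ v_{2m+3−j} ∧ v_{2m+4−j} ∧ ⋯ ∧ v_{2m+1} ) lies in the subspace Σ_{k=0}^{m−1} α(⋀^k V) of Cl(V); that is, the degree-m component of A_{(j)} under the antisymmetrization identification ⋀•V ≅ Cl(V) equals (−1)^(m(m+1)/2) v_1 ∧ ⋯ ∧ v_{m+1−j} ∧ v_{2m+3−j} ∧ ⋯ ∧ v_{2m+1}. -/
import Mathlib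


/-!
Formalization of a statement from "A Landau-Ginzburg model for Lagrangian
Grassmannians, Langlands duality, and relations in quantum cohomology"
(arXiv:1304.4958).

Conventions: `V = ℂ^(2m+1)` with 0-based coordinates (`a : Fin (2m+1)`
corresponds to the paper's 1-based basis index `i = a+1`);
`ε(i) = (−1)^(m+1−i)`, written as `(−1)^(m+1+i)` which has the same parity.
-/

noncomputable section
open scoped BigOperators

/-- The ambient `(2m+1)`-dimensional complex vector space `V`. -/
abbrev Vsp (m : ℕ) := Fin (2 * m + 1) → ℂ

/-- `ε(i) = (−1)^(m+1−i) = (−1)^(m+1+i)`. -/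
def eps (m i : ℕ) : ℂ := (-1 : ℂ) ^ (m + 1 + i)

/-- The Gram matrix of the symmetric bilinear form `Φ` determined by
`2Φ(v_i, v_{2m+2−j}) = (−1)^(m+1−i) δ_{ij}` (0-based: nonzero iff `a + b = 2m`,
with value `(−1)^(m+a)/2`). -/
def PhiMat (m : ℕ) : Matrix (Fin (2 * m + 1)) (Fin (2 * m + 1)) ℂ :=
  Matrix.of fun a b => if (a : ℕ) + (b : ℕ) = 2 * m then (-1 : ℂ) ^ (m + (a : ℕ)) / 2 else 0

/-- The symmetric bilinear form `Φ` on `V`. -/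
def Phi (m : ℕ) : LinearMap.BilinForm ℂ (Vsp m) := Matrix.toBilin' (PhiMat m)

/-- The quadratic form `v ↦ Φ(v,v)`. -/
def Qf (m : ℕ) : QuadraticForm ℂ (Vsp m) := (Phi m).toQuadraticMap

/-- The Clifford algebra `Cl(V)` of the quadratic form `v ↦ Φ(v,v)`; in it,
`v v' + v' v = 2Φ(v,v')`. -/
abbrev Cl (m : ℕ) := CliffordAlgebra (Qf m)

/-- The standard basis vector `v_i` of `V`, for a (1-based) paper index `i ∈ {1,…,2m+1}`. -/
def vb (m i : ℕ) : Vsp m := fun a => if (a : ℕ) + 1 = i then 1 else 0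

/-- The image of the basis vector `v_i` in the Clifford algebra. -/
def cv (m i : ℕ) : Cl m := CliffordAlgebra.ι (Qf m) (vb m i)

/-- The ordered product `v_K = v_{k_1} v_{k_2} ⋯ v_{k_r} ∈ Cl(V)` for a set of paper
indices `K = {k_1 < ⋯ < k_r} ⊆ {1,…,2m+1}`. -/
def clProd (m : ℕ) (K : Finset ℕ) : Cl m := ((K.sort (· ≤ ·)).map (cv m)).prod

/-- The antisymmetrization `α(u_1 ∧ ⋯ ∧ u_k) = (1/k!) Σ_{σ ∈ S_k} sgn(σ) u_{σ(1)} ⋯ u_{σ(k)}`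
of a list `[u_1, …, u_k]` of vectors of `V`, as an element of `Cl(V)`. -/
def asym (m : ℕ) (l : List (Vsp m)) : Cl m :=
  ((l.length.factorial : ℂ))⁻¹ •
    ∑ σ : Equiv.Perm (Fin l.length),
      ((Equiv.Perm.sign σ : ℤ) : ℂ) •
        (List.ofFn (fun k => CliffordAlgebra.ι (Qf m) (l.get (σ k)))).prod

/-- The element `A_{(j)} ∈ Cl(V)`:
`A_{(j)} = ((−1)^(m(m+1)/2)/2) [ 2 v_{{1,…,m+1−j} ∪ {2m+3−j,…,2m+1}}
  + Σ_{I ⊊ {1,…,m+1−j}} ( Π_{l ∈ {1,…,m+1−j}∖I} (−1)^l ) v_{I ∪ {2m+3−j,…,m+j} ∪ Ī} ]`. -/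
def AC (m j : ℕ) : Cl m :=
  ((-1 : ℂ) ^ (m * (m + 1) / 2) / 2) •
    ((2 : ℂ) • clProd m (Finset.Icc 1 (m + 1 - j) ∪ Finset.Icc (2 * m + 3 - j) (2 * m + 1))
      + ∑ I ∈ (Finset.Icc 1 (m + 1 - j)).powerset.filter (· ≠ Finset.Icc 1 (m + 1 - j)),
          (∏ l ∈ Finset.Icc 1 (m + 1 - j) \ I, (-1 : ℂ) ^ l) •
            clProd m (I ∪ Finset.Icc (2 * m + 3 - j) (m + j) ∪
              I.image (fun i => 2 * m + 2 - i)))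


/-! ### Auxiliary development for the proof -/

section AuxForProof
set_option maxHeartbeats 1000000

variable (m : ℕ)

/-- Product of the Clifford images of `f 0, …, f (r-1)`. -/
def prodF {r : ℕ} (f : Fin r → Vsp m) : Cl m :=
  (List.ofFn fun k => CliffordAlgebra.ι (Qf m) (f k)).prod

/-- Function version of the antisymmetrization. -/
def asymF (r : ℕ) (f : Fin r → Vsp m) : Cl m :=
  ((r.factorial : ℂ))⁻¹ •
    ∑ σ : Equiv.Perm (Fin r), ((Equiv.Perm.sign σ : ℤ) : ℂ) • prodF m (fun k => f (σ k))

/-- Span of products of at most `n` generators. -/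
def Pspan (n : ℕ) : Submodule ℂ (Cl m) :=
  Submodule.span ℂ {x : Cl m | ∃ l : List (Vsp m), l.length ≤ n ∧
    x = (l.map (CliffordAlgebra.ι (Qf m))).prod}

/-- Span of antisymmetrizations of lists of length `< n`. -/
def Aspan (n : ℕ) : Submodule ℂ (Cl m) :=
  Submodule.span ℂ {x : Cl m | ∃ l : List (Vsp m), l.length < n ∧ x = asym m l}

variable {m}

lemma asym_eq_asymF (l : List (Vsp m)) : asym m l = asymF m l.length l.get := rfl

lemma Pspan_mono {n n' : ℕ} (h : n ≤ n') : Pspan m n ≤ Pspan m n' :=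
  Submodule.span_mono fun x ⟨l, hl, e⟩ => ⟨l, hl.trans h, e⟩

lemma Aspan_mono {n n' : ℕ} (h : n ≤ n') : Aspan m n ≤ Aspan m n' :=
  Submodule.span_mono fun x ⟨l, hl, e⟩ => ⟨l, hl.trans_le h, e⟩

lemma prod_mem_Pspan {n : ℕ} {l : List (Vsp m)} (h : l.length ≤ n) :
    (l.map (CliffordAlgebra.ι (Qf m))).prod ∈ Pspan m n :=
  Submodule.subset_span ⟨l, h, rfl⟩

lemma ι_mul_mem {n : ℕ} {x : Cl m} (v : Vsp m) (hx : x ∈ Pspan m n) :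
    CliffordAlgebra.ι (Qf m) v * x ∈ Pspan m (n + 1) := by
  refine Submodule.span_induction
    (p := fun x _ => CliffordAlgebra.ι (Qf m) v * x ∈ Pspan m (n + 1)) ?_ ?_ ?_ ?_ hx
  · rintro x ⟨l, hl, rfl⟩
    have : CliffordAlgebra.ι (Qf m) v * (l.map (CliffordAlgebra.ι (Qf m))).prod
        = ((v :: l).map (CliffordAlgebra.ι (Qf m))).prod := by simp
    rw [this]
    exact prod_mem_Pspan (by simpa using Nat.succ_le_succ hl)
  · simp
  · intro x y _ _ hx hy; rw [mul_add]; exact add_mem hx hy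
  · intro a x _ hx; rw [mul_smul_comm]; exact Submodule.smul_mem _ _ hx

lemma prodF_cons {r : ℕ} (f : Fin (r + 1) → Vsp m) :
    prodF m f = CliffordAlgebra.ι (Qf m) (f 0) * prodF m (fun k => f k.succ) := by
  rw [prodF, List.ofFn_succ, List.prod_cons]; rfl

lemma prodF_eq_list {r : ℕ} (g : Fin r → Vsp m) :
    prodF m g = ((List.ofFn g).map (CliffordAlgebra.ι (Qf m))).prod := by
  rw [List.map_ofFn]; rfl

lemma prodF_mem {r n : ℕ} (g : Fin r → Vsp m) (h : r ≤ n) : prodF m g ∈ Pspan m n := by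
  rw [prodF_eq_list]; exact prod_mem_Pspan (by simpa using h)

lemma prodF_zero (f : Fin 0 → Vsp m) : prodF m f = 1 := by
  simp [prodF, List.ofFn_zero]

lemma asymF_zero (f : Fin 0 → Vsp m) : asymF m 0 f = 1 := by
  have huniq : ∀ σ : Equiv.Perm (Fin 0), σ = 1 := fun σ => Equiv.ext fun i => i.elim0
  rw [asymF, Finset.sum_eq_single (1 : Equiv.Perm (Fin 0))]
  · simp [prodF_zero]
  · intro b _ hb; exact absurd (huniq b) hb
  · intro h; exact absurd (Finset.mem_univ _) h

lemma asymF_one (f : Fin 1 → Vsp m) : asymF m 1 f = prodF m f := by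
  have huniq : ∀ σ : Equiv.Perm (Fin 1), σ = 1 := fun σ =>
    Equiv.ext fun i => Subsingleton.elim _ _
  rw [asymF, Finset.sum_eq_single (1 : Equiv.Perm (Fin 1))]
  · simp
  · intro b _ hb; exact absurd (huniq b) hb
  · intro h; exact absurd (Finset.mem_univ _) h

lemma succ_ne_one {n : ℕ} (k : Fin n) : k.succ.succ ≠ (1 : Fin (n + 2)) := by
  rw [← Fin.succ_zero_eq_one]
  exact fun h => Fin.succ_ne_zero _ (Fin.succ_injective _ h)

lemma swap01_mem {n : ℕ} (f : Fin (n + 2) → Vsp m) :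
    prodF m f + prodF m (fun k => f (Equiv.swap 0 1 k)) ∈ Pspan m n := by
  have htail : ∀ k : Fin n, f (Equiv.swap 0 1 k.succ.succ) = f k.succ.succ := by
    intro k
    rw [Equiv.swap_apply_of_ne_of_ne (Fin.succ_ne_zero _) (succ_ne_one k)]
  have h1 : prodF m f
      = CliffordAlgebra.ι (Qf m) (f 0) *
        (CliffordAlgebra.ι (Qf m) (f 1) * prodF m (fun k => f k.succ.succ)) := by
    rw [prodF_cons, prodF_cons]
    simp only [Fin.succ_zero_eq_one]
  have h2 : prodF m (fun k => f (Equiv.swap 0 1 k))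
      = CliffordAlgebra.ι (Qf m) (f 1) *
        (CliffordAlgebra.ι (Qf m) (f 0) * prodF m (fun k => f k.succ.succ)) := by
    rw [prodF_cons, prodF_cons]
    simp only [Fin.succ_zero_eq_one, Equiv.swap_apply_left, Equiv.swap_apply_right, htail]
  rw [h1, h2, ← mul_assoc, ← mul_assoc, ← add_mul, CliffordAlgebra.ι_mul_ι_add_swap,
    ← Algebra.smul_def]
  exact Submodule.smul_mem _ _ (prodF_mem _ le_rfl)

lemma succ_swap {n : ℕ} (a b c : Fin (n + 1)) :
    Equiv.swap a.succ b.succ c.succ = (Equiv.swap a b c).succ := by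
  simp only [Equiv.swap_apply_def, Fin.succ_inj]
  split_ifs <;> rfl

lemma swap0p_mem : ∀ (n : ℕ) (f : Fin (n + 2) → Vsp m) (p : Fin (n + 2)), p ≠ 0 →
    prodF m f + prodF m (fun k => f (Equiv.swap 0 p k)) ∈ Pspan m n := by
  intro n
  induction n with
  | zero =>
    intro f p hp
    have : p = 1 := by
      rcases Fin.exists_succ_eq.mpr hp with ⟨q, rfl⟩
      have : q = 0 := Subsingleton.elim _ _
      rw [this, Fin.succ_zero_eq_one]
    subst this
    exact swap01_mem f
  | succ n ih =>
    intro f p hp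
    by_cases hp1 : p = 1
    · subst hp1; exact swap01_mem f
    · obtain ⟨q, hq⟩ := Fin.exists_succ_eq.mpr hp
      have hq0 : q ≠ 0 := by
        rintro rfl; rw [Fin.succ_zero_eq_one] at hq; exact hp1 hq.symm
      set g : Fin (n + 3) → Vsp m := fun k => f (Equiv.swap 0 1 (Equiv.swap 1 p k)) with hg
      have ha : (fun k => f (Equiv.swap 0 p k)) = fun k => g (Equiv.swap 0 1 k) := by
        funext k
        simp only [hg]
        congr 1
        have hp0' : (0 : Fin (n + 3)) ≠ p := fun h => hp h.symm
        have hp1' : (1 : Fin (n + 3)) ≠ p := fun h => hp1 h.symm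
        by_cases hk0 : k = 0 <;> by_cases hk1 : k = 1 <;> by_cases hkp : k = p <;>
          simp_all [Equiv.swap_apply_def]
      have hb : ∀ k : Fin (n + 2), g k.succ = f (Equiv.swap 0 1 (Equiv.swap 0 q k).succ) := by
        intro k
        have hin : Equiv.swap 1 p k.succ = (Equiv.swap 0 q k).succ := by
          rw [← hq, ← Fin.succ_zero_eq_one]
          exact succ_swap 0 q k
        simp only [hg]
        rw [hin]
      have hg0 : g 0 = f 1 := by
        simp only [hg]
        rw [Equiv.swap_apply_of_ne_of_ne (Ne.symm (by exact one_ne_zero)) (Ne.symm hp),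
          Equiv.swap_apply_left]
      have m1 := swap01_mem (n := n + 1) f
      have m2 := ih (fun k => f (Equiv.swap 0 1 k.succ)) q hq0
      have m2' := ι_mul_mem (f 1) m2
      have e1 : CliffordAlgebra.ι (Qf m) (f 1) *
          (prodF m (fun k => f (Equiv.swap 0 1 k.succ)) +
            prodF m (fun k => (fun k' => f (Equiv.swap 0 1 k'.succ)) (Equiv.swap 0 q k)))
          = prodF m (fun k => f (Equiv.swap 0 1 k)) + prodF m g := by
        rw [mul_add]
        congr 1
        · rw [prodF_cons (fun k => f (Equiv.swap 0 1 k))]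
          simp only [Equiv.swap_apply_left]
        · rw [prodF_cons g, hg0]
          congr 2
          funext k
          rw [hb k]
      rw [e1] at m2'
      have m3 := swap01_mem (n := n + 1) g
      rw [ha]
      have : prodF m f + prodF m (fun k => g (Equiv.swap 0 1 k)) =
          (prodF m f + prodF m (fun k => f (Equiv.swap 0 1 k)))
          - (prodF m (fun k => f (Equiv.swap 0 1 k)) + prodF m g)
          + (prodF m g + prodF m (fun k => g (Equiv.swap 0 1 k))) := by abel
      rw [this]
      exact add_mem (sub_mem m1 m2') m3

lemma main_diff : ∀ (n : ℕ) (f : Fin n → Vsp m), prodF m f - asymF m n f ∈ Pspan m (n - 1) := by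
  intro n
  induction n using Nat.twoStepInduction with
  | zero => intro f; rw [asymF_zero, prodF_zero, sub_self]; exact zero_mem _
  | one => intro f; rw [asymF_one, sub_self]; exact zero_mem _
  | more n _ ih2 =>
    intro f
    set ιQ := CliffordAlgebra.ι (Qf m) with hιQ
    set g : Fin (n + 2) → Fin (n + 1) → Vsp m :=
      fun p k => f (Equiv.swap 0 p k.succ) with hgdef
    have hfac : ((n + 1).factorial : ℂ) ≠ 0 := Nat.cast_ne_zero.mpr (Nat.factorial_ne_zero _)
    have hn2 : ((n + 2 : ℕ) : ℂ) ≠ 0 := Nat.cast_ne_zero.mpr (by omega)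
    have hterm : ∀ (p : Fin (n + 2)) (τ : Equiv.Perm (Fin (n + 1))),
        ((Equiv.Perm.sign (Equiv.Perm.decomposeFin.symm (p, τ)) : ℤ) : ℂ) •
          prodF m (fun k => f (Equiv.Perm.decomposeFin.symm (p, τ) k))
        = (if p = 0 then (1 : ℂ) else -1) • (((Equiv.Perm.sign τ : ℤ) : ℂ) •
            (ιQ (f p) * prodF m (fun k => g p (τ k)))) := by
      intro p τ
      have h1 : prodF m (fun k => f (Equiv.Perm.decomposeFin.symm (p, τ) k))
          = ιQ (f p) * prodF m (fun k => g p (τ k)) := by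
        rw [prodF_cons]
        congr 1
        · rw [Equiv.Perm.decomposeFin_symm_apply_zero]
        · congr 1
          funext k
          rw [Equiv.Perm.decomposeFin_symm_apply_succ]
      rw [h1, Equiv.Perm.decomposeFin.symm_sign]
      rcases eq_or_ne p 0 with rfl | hp0
      · simp
      · simp only [if_neg hp0, Units.val_mul, Int.cast_mul, mul_smul]
        push_cast
        simp
    have T_eq : ∑ σ : Equiv.Perm (Fin (n + 2)),
          ((Equiv.Perm.sign σ : ℤ) : ℂ) • prodF m (fun k => f (σ k))
        = ∑ p : Fin (n + 2), (if p = 0 then (1 : ℂ) else -1) •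
            (ιQ (f p) * (((n + 1).factorial : ℂ) • asymF m (n + 1) (g p))) := by
      rw [← Equiv.sum_comp (Equiv.Perm.decomposeFin.symm)
        (fun σ : Equiv.Perm (Fin (n + 2)) =>
          ((Equiv.Perm.sign σ : ℤ) : ℂ) • prodF m (fun k => f (σ k))), Fintype.sum_prod_type]
      refine Finset.sum_congr rfl fun p _ => ?_
      rw [Finset.sum_congr rfl fun τ _ => hterm p τ, ← Finset.smul_sum]
      congr 1
      rw [Finset.sum_congr rfl fun τ _ => (mul_smul_comm _ _ _).symm, ← Finset.mul_sum]
      congr 1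
      rw [asymF, smul_smul, mul_inv_cancel₀ hfac, one_smul]
    have hA : asymF m (n + 2) f = (((n + 2 : ℕ) : ℂ))⁻¹ •
        ∑ p : Fin (n + 2), (if p = 0 then (1 : ℂ) else -1) •
          (ιQ (f p) * asymF m (n + 1) (g p)) := by
      rw [asymF, T_eq]
      rw [Finset.sum_congr rfl fun p _ => by
        rw [mul_smul_comm, smul_comm (if p = 0 then (1:ℂ) else -1) (((n+1).factorial : ℂ))]]
      rw [← Finset.smul_sum, smul_smul]
      congr 1
      have : ((n + 2).factorial : ℂ) = ((n + 2 : ℕ) : ℂ) * ((n + 1).factorial : ℂ) := by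
        rw [show (n + 2).factorial = (n + 2) * (n + 1).factorial from rfl]
        push_cast
        ring
      rw [this, mul_inv, inv_mul_cancel_right₀ hfac]
    have IH' : ∀ p, prodF m (g p) - asymF m (n + 1) (g p) ∈ Pspan m n := by
      intro p
      have := ih2 (g p)
      simpa using this
    have hswap_head : ∀ p : Fin (n + 2),
        ιQ (f p) * prodF m (g p) = prodF m (fun k => f (Equiv.swap 0 p k)) := by
      intro p
      rw [prodF_cons (fun k => f (Equiv.swap 0 p k))]
      congr 1
    have hswap_mem : ∀ p : Fin (n + 2),
        prodF m f - (if p = 0 then (1 : ℂ) else -1) •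
          prodF m (fun k => f (Equiv.swap 0 p k)) ∈ Pspan m (n + 1) := by
      intro p
      rcases eq_or_ne p 0 with rfl | hp
      · rw [if_pos rfl, one_smul]
        have : (fun k => f (Equiv.swap 0 0 k)) = f := by
          funext k; rw [Equiv.swap_self]; rfl
        rw [this, sub_self]; exact zero_mem _
      · rw [if_neg hp, neg_one_smul, sub_neg_eq_add]
        exact Pspan_mono (Nat.le_succ n) (swap0p_mem n f p hp)
    have key : prodF m f - asymF m (n + 2) f
        = (((n + 2 : ℕ) : ℂ))⁻¹ • ∑ p : Fin (n + 2),
            ((prodF m f - (if p = 0 then (1 : ℂ) else -1) •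
                prodF m (fun k => f (Equiv.swap 0 p k)))
              + (if p = 0 then (1 : ℂ) else -1) •
                (ιQ (f p) * (prodF m (g p) - asymF m (n + 1) (g p)))) := by
      have hp1 : ∀ p : Fin (n + 2),
          (prodF m f - (if p = 0 then (1 : ℂ) else -1) •
              prodF m (fun k => f (Equiv.swap 0 p k)))
            + (if p = 0 then (1 : ℂ) else -1) •
              (ιQ (f p) * (prodF m (g p) - asymF m (n + 1) (g p)))
          = prodF m f - (if p = 0 then (1 : ℂ) else -1) •
              (ιQ (f p) * asymF m (n + 1) (g p)) := by
        intro p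
        rw [mul_sub, hswap_head p, smul_sub]
        abel
      rw [Finset.sum_congr rfl fun p _ => hp1 p, Finset.sum_sub_distrib,
        Finset.sum_const, Finset.card_univ, Fintype.card_fin, hA, smul_sub,
        ← Nat.cast_smul_eq_nsmul ℂ (n + 2) (prodF m f), smul_smul,
        inv_mul_cancel₀ hn2, one_smul]
    rw [show n + 2 - 1 = n + 1 from rfl, key]
    exact Submodule.smul_mem _ _ (sum_mem fun p _ =>
      add_mem (hswap_mem p) (Submodule.smul_mem _ _ (ι_mul_mem _ (IH' p))))

lemma main_diff_list (l : List (Vsp m)) :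
    (l.map (CliffordAlgebra.ι (Qf m))).prod - asym m l ∈ Pspan m (l.length - 1) := by
  have h := main_diff l.length l.get
  rw [asym_eq_asymF]
  have e : prodF m l.get = (l.map (CliffordAlgebra.ι (Qf m))).prod := by
    rw [prodF_eq_list, List.ofFn_get]
  rwa [e] at h

lemma asym_nil : asym m ([] : List (Vsp m)) = 1 := by
  rw [asym_eq_asymF]
  exact asymF_zero _

lemma prodL_mem_Aspan : ∀ (n : ℕ) (l : List (Vsp m)), l.length ≤ n →
    (l.map (CliffordAlgebra.ι (Qf m))).prod ∈ Aspan m (n + 1) := by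
  intro n
  induction n with
  | zero =>
    intro l hl
    rw [List.length_eq_zero_iff.mp (Nat.le_zero.mp hl)]
    exact Submodule.subset_span ⟨[], Nat.zero_lt_one, by rw [asym_nil]; simp⟩
  | succ n ihn =>
    intro l hl
    have h1 : asym m l ∈ Aspan m (n + 2) := Submodule.subset_span ⟨l, by omega, rfl⟩
    have h2 := main_diff_list l
    have h3 : Pspan m (l.length - 1) ≤ Aspan m (n + 2) := by
      refine le_trans (Pspan_mono (show l.length - 1 ≤ n by omega)) ?_
      refine Submodule.span_le.mpr ?_
      rintro x ⟨l', hl', rfl⟩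
      exact Aspan_mono (Nat.le_succ _) (ihn l' hl')
    have h4 := add_mem (h3 h2) h1
    rwa [sub_add_cancel] at h4

end AuxForProof

/-- Let `(m+1)/2 < j ≤ m`. Then
`A_{(j)} − α((−1)^(m(m+1)/2) v_1 ∧ ⋯ ∧ v_{m+1−j} ∧ v_{2m+3−j} ∧ ⋯ ∧ v_{2m+1})` lies in
`Σ_{k=0}^{m−1} α(⋀^k V)` (the span of the antisymmetrizations of wedges of fewer than `m`
vectors); that is, the degree-`m` component of `A_{(j)}` under the antisymmetrization
identification `⋀•V ≅ Cl(V)` equals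
`(−1)^(m(m+1)/2) v_1 ∧ ⋯ ∧ v_{m+1−j} ∧ v_{2m+3−j} ∧ ⋯ ∧ v_{2m+1}`. -/
theorem A_top_degree_component (m j : ℕ) (hm : 2 ≤ m) (hj : m + 1 < 2 * j) (hjm : j ≤ m) :
    AC m j - ((-1 : ℂ) ^ (m * (m + 1) / 2)) •
        asym m (((Finset.Icc 1 (m + 1 - j) ∪
          Finset.Icc (2 * m + 3 - j) (2 * m + 1)).sort (· ≤ ·)).map (vb m))
      ∈ Submodule.span ℂ {x : Cl m | ∃ l : List (Vsp m), l.length < m ∧ x = asym m l} := by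
  classical
  have hclK : ∀ K : Finset ℕ, clProd m K
      = (((K.sort (· ≤ ·)).map (vb m)).map (CliffordAlgebra.ι (Qf m))).prod := by
    intro K; rw [clProd, List.map_map]; rfl
  set c : ℂ := (-1 : ℂ) ^ (m * (m + 1) / 2) with hc
  set K0 := Finset.Icc 1 (m + 1 - j) ∪ Finset.Icc (2 * m + 3 - j) (2 * m + 1) with hK0
  set L0 : List (Vsp m) := (K0.sort (· ≤ ·)).map (vb m) with hL0
  show AC m j - c • asym m L0 ∈ Aspan m m
  have hlen : L0.length ≤ m := by
    rw [hL0, List.length_map, Finset.length_sort]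
    have h1 := Finset.card_union_le (Finset.Icc 1 (m + 1 - j))
      (Finset.Icc (2 * m + 3 - j) (2 * m + 1))
    rw [Nat.card_Icc, Nat.card_Icc] at h1
    rw [hK0]
    omega
  have hAspan_prod : ∀ (l : List (Vsp m)), l.length ≤ m - 1 →
      (l.map (CliffordAlgebra.ι (Qf m))).prod ∈ Aspan m m := by
    intro l hl
    have := prodL_mem_Aspan (m - 1) l hl
    rwa [show m - 1 + 1 = m by omega] at this
  have mem1 : (L0.map (CliffordAlgebra.ι (Qf m))).prod - asym m L0 ∈ Aspan m m := by
    have h := main_diff_list L0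
    have hle : Pspan m (L0.length - 1) ≤ Aspan m m := by
      refine le_trans (Pspan_mono (show L0.length - 1 ≤ m - 1 by omega)) ?_
      refine Submodule.span_le.mpr ?_
      rintro x ⟨l', hl', rfl⟩
      exact hAspan_prod l' hl'
    exact hle h
  have mem2 : ∀ I ∈ (Finset.Icc 1 (m + 1 - j)).powerset.filter
      (· ≠ Finset.Icc 1 (m + 1 - j)),
      clProd m (I ∪ Finset.Icc (2 * m + 3 - j) (m + j) ∪
        I.image (fun i => 2 * m + 2 - i)) ∈ Aspan m m := by
    intro I hI
    rw [Finset.mem_filter, Finset.mem_powerset] at hI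
    have hcard : I.card < (Finset.Icc 1 (m + 1 - j)).card :=
      Finset.card_lt_card (HasSubset.Subset.ssubset_of_ne hI.1 hI.2)
    rw [Nat.card_Icc] at hcard
    have h1 := Finset.card_union_le (I ∪ Finset.Icc (2 * m + 3 - j) (m + j))
      (I.image (fun i => 2 * m + 2 - i))
    have h2 := Finset.card_union_le I (Finset.Icc (2 * m + 3 - j) (m + j))
    have h3 := Finset.card_image_le (s := I) (f := fun i => 2 * m + 2 - i)
    rw [Nat.card_Icc] at h2
    rw [hclK]
    refine hAspan_prod _ ?_
    rw [List.length_map, Finset.length_sort]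
    omega
  have hAC : AC m j - c • asym m L0
      = c • ((L0.map (CliffordAlgebra.ι (Qf m))).prod - asym m L0)
        + (c / 2) • ∑ I ∈ (Finset.Icc 1 (m + 1 - j)).powerset.filter
            (· ≠ Finset.Icc 1 (m + 1 - j)),
            (∏ l ∈ Finset.Icc 1 (m + 1 - j) \ I, (-1 : ℂ) ^ l) •
              clProd m (I ∪ Finset.Icc (2 * m + 3 - j) (m + j) ∪
                I.image (fun i => 2 * m + 2 - i)) := by
    rw [AC, ← hc, ← hK0, smul_add, smul_smul, div_mul_cancel₀ c two_ne_zero,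
      hclK K0, ← hL0, smul_sub]
    abel
  rw [hAC]
  exact add_mem (Submodule.smul_mem _ _ mem1)
    (Submodule.smul_mem _ _ (sum_mem fun I hI => Submodule.smul_mem _ _ (mem2 I hI)))


end
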